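/- arXiv:2011.11489 — 2 statements merged into one kernel-verified Lean document; each statement's English description precedes it below -/
import Mathlib

section
/- If X is a Polish space, then the collection F(X) of closed subsets of X, equipped with the Effros σ-algebra generated by the sets {F ∈ F(X) : F ∩ U ≠ ∅} for U ⊆ X open, is a standard Borel space. -/
/-!
Fix a complete metric on `X` and a countable dense family `(x i)`. A closed set `F` is determined
by its profile `i ↦ d(x i, F)`, and `F` meets an open `U` iff `d(x i, F) < ε` for some ball
`B(x i, ε) ⊆ U`; so `F ↦ (d(x i, F))ᵢ` identifies the Effros σ-algebra with the pullback of the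
Borel σ-algebra of `ℝ≥0∞^ι`. The range is Borel, being cut out by countably many conditions:
`r i ≤ d(x i, x j) + r j`, and, whenever `r i < ∞`, some `x j` with `r j` small lies within about
`r i` of `x i`. Conversely, such an `r` is the profile of the zero set of `y ↦ infⱼ d(y, x j) + r j`:
following the second condition with geometrically decreasing errors gives Cauchy sequences whose
limits, which exist by completeness, are zeros at distance about `r i` from `x i`.
-/

/-- The Effros σ-algebra on the collection of closed subsets of `X`, generated by
the sets `{F : F ∩ U ≠ ∅}` for `U ⊆ X` open. -/
def EffrosSigmaAlgebra (X : Type*) [TopologicalSpace X] :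
    MeasurableSpace {F : Set X // IsClosed F} :=
  MeasurableSpace.generateFrom
    {S | ∃ U : Set X, IsOpen U ∧
      S = {F : {F : Set X // IsClosed F} | (F.1 ∩ U).Nonempty}}

open Set Filter Topology Metric ENNReal

theorem MeasurableEquiv.standardBorelSpace {α β : Type*} [MeasurableSpace α]
    [MeasurableSpace β] [StandardBorelSpace β] (e : α ≃ᵐ β) : StandardBorelSpace α := by
  let := upgradeStandardBorel β
  let : TopologicalSpace α := .induced e inferInstance
  have : PolishSpace α := e.toEquiv.polishSpace_induced
  have : BorelSpace α := ⟨by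
    rw [borel_comap, ← eq_borel_upgradeStandardBorel β, e.measurableEmbedding.comap_eq]⟩
  infer_instance

theorem MeasurableEmbedding.standardBorelSpace {α β : Type*} [MeasurableSpace α]
    [MeasurableSpace β] [StandardBorelSpace β] {f : α → β} (hf : MeasurableEmbedding f) :
    StandardBorelSpace α :=
  have := hf.measurableSet_range.standardBorel
  hf.equivRange.standardBorelSpace

theorem ENNReal.inv_two_pow_succ_add_self (k : ℕ) :
    (2⁻¹ : ℝ≥0∞) ^ (k + 1) + 2⁻¹ ^ (k + 1) = 2⁻¹ ^ k := by
  rw [pow_succ, ← div_eq_mul_inv, ENNReal.add_halves]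

namespace Effros

variable {X ι : Type*} [PseudoEMetricSpace X] (x : ι → X)

noncomputable def profile (s : Set X) (i : ι) : ℝ≥0∞ := infEDist (x i) s

-- The profile of `∅` is constantly `∞`, hence the hypothesis `r i ≠ ∞` in the second clause.
def IsProfile (r : ι → ℝ≥0∞) : Prop :=
  (∀ i j, r i ≤ edist (x i) (x j) + r j) ∧
    ∀ i k, r i ≠ ∞ → ∃ j, r j < 2⁻¹ ^ k ∧ edist (x i) (x j) < r i + 2⁻¹ ^ k

noncomputable def envelope (r : ι → ℝ≥0∞) (y : X) : ℝ≥0∞ := ⨅ i, edist y (x i) + r i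

variable {x}

theorem isProfile_profile (hx : DenseRange x) (s : Set X) : IsProfile x (profile x s) := by
  refine ⟨fun i j => infEDist_le_edist_add_infEDist, fun i k hi => ?_⟩
  have hpos : (0 : ℝ≥0∞) < 2⁻¹ ^ (k + 1) := ENNReal.pow_pos (by norm_num) _
  obtain ⟨y, hys, hiy⟩ := infEDist_lt_iff.1 (ENNReal.lt_add_right hi hpos.ne')
  obtain ⟨_, ⟨j, rfl⟩, hyj⟩ := EMetric.mem_closure_iff.1 (hx y) _ hpos
  refine ⟨j, ?_, ?_⟩
  · calc profile x s j ≤ edist (x j) y := infEDist_le_edist_of_mem hys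
      _ < 2⁻¹ ^ (k + 1) := by rwa [edist_comm]
      _ ≤ 2⁻¹ ^ k := pow_le_pow_of_le_one zero_le (by norm_num) k.le_succ
  · calc edist (x i) (x j) ≤ edist (x i) y + edist y (x j) := edist_triangle _ _ _
      _ < profile x s i + 2⁻¹ ^ (k + 1) + 2⁻¹ ^ (k + 1) := ENNReal.add_lt_add hiy hyj
      _ = profile x s i + 2⁻¹ ^ k := by rw [add_assoc, ENNReal.inv_two_pow_succ_add_self]

theorem measurableSet_setOf_isProfile [Countable ι] : MeasurableSet {r | IsProfile x r} := by
  simp only [IsProfile, measurableSet_setOfPred]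
  fun_prop

theorem IsProfile.le_edist_add_envelope {r : ι → ℝ≥0∞} (hr : IsProfile x r) (i : ι) (y : X) :
    r i ≤ edist (x i) y + envelope x r y := by
  rw [envelope, ENNReal.add_iInf]
  refine le_iInf fun j => (hr.1 i j).trans ?_
  calc edist (x i) (x j) + r j ≤ edist (x i) y + edist y (x j) + r j := by
        gcongr; exact edist_triangle _ _ _
    _ = edist (x i) y + (edist y (x j) + r j) := add_assoc _ _ _

theorem exists_envelope_eq_zero_edist_le [CompleteSpace X] {r : ι → ℝ≥0∞}
    (hr : ∀ i k, r i ≠ ∞ → ∃ j, r j < 2⁻¹ ^ k ∧ edist (x i) (x j) < r i + 2⁻¹ ^ k) {i : ι}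
    (hi : r i ≠ ∞) (k : ℕ) : ∃ y, envelope x r y = 0 ∧ edist (x i) y ≤ r i + 5 * 2⁻¹ ^ k := by
  have hr' (i : ι) (k : ℕ) :
      ∃ j, r i ≠ ∞ → r j < 2⁻¹ ^ k ∧ edist (x i) (x j) < r i + 2⁻¹ ^ k := by
    obtain hi | hi := eq_or_ne (r i) ∞
    · exact ⟨i, fun h => absurd hi h⟩
    · exact (hr i k hi).imp fun _ hj _ => hj
  choose next hnext using hr'
  let s : ℕ → ι := fun n => Nat.rec (next i k) (fun n j => next j (k + n + 1)) n
  have hs : ∀ n, r (s n) < 2⁻¹ ^ (k + n) := by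
    intro n
    induction n with
    | zero => exact (hnext i k hi).1
    | succ n ih => exact (hnext (s n) (k + n + 1) ih.ne_top).1
  have hstep : ∀ n, edist (x (s n)) (x (s (n + 1))) ≤ 2 * 2⁻¹ ^ k * 2⁻¹ ^ n := fun n =>
    calc edist (x (s n)) (x (s (n + 1))) ≤ r (s n) + 2⁻¹ ^ (k + n + 1) :=
          (hnext (s n) (k + n + 1) (hs n).ne_top).2.le
      _ ≤ 2⁻¹ ^ (k + n) + 2⁻¹ ^ (k + n) :=
          add_le_add (hs n).le (pow_le_pow_of_le_one zero_le (by norm_num) (k + n).le_succ)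
      _ = 2 * 2⁻¹ ^ k * 2⁻¹ ^ n := by rw [pow_add]; ring
  obtain ⟨y, hy⟩ := cauchySeq_tendsto_of_complete <|
    cauchySeq_of_edist_le_geometric 2⁻¹ _ (by norm_num) (by finiteness) hstep
  have hs0y : edist (x (s 0)) y ≤ 4 * 2⁻¹ ^ k := by
    refine (edist_le_of_edist_le_geometric_of_tendsto₀ 2⁻¹ _ hstep hy).trans_eq ?_
    rw [ENNReal.one_sub_inv_two, div_eq_mul_inv, inv_inv]
    ring
  have hlim : Tendsto (fun n => edist (x (s n)) y + 2⁻¹ ^ n) atTop (𝓝 0) := by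
    simpa using (hy.edist (tendsto_const_nhds (x := y))).add
      (ENNReal.tendsto_pow_atTop_nhds_zero_of_lt_one (by norm_num : (2⁻¹ : ℝ≥0∞) < 1))
  refine ⟨y, nonpos_iff_eq_zero.1 <| ge_of_tendsto' hlim fun n => ?_, ?_⟩
  · calc envelope x r y ≤ edist y (x (s n)) + r (s n) := iInf_le _ _
      _ ≤ edist (x (s n)) y + 2⁻¹ ^ n := by
          rw [edist_comm]
          exact add_le_add_right ((hs n).le.trans
            (pow_le_pow_of_le_one zero_le (by norm_num) (Nat.le_add_left n k))) _
  · calc edist (x i) y ≤ edist (x i) (x (s 0)) + edist (x (s 0)) y := edist_triangle _ _ _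
      _ ≤ r i + 2⁻¹ ^ k + 4 * 2⁻¹ ^ k := add_le_add (hnext i k hi).2.le hs0y
      _ = r i + 5 * 2⁻¹ ^ k := by ring

theorem IsProfile.profile_setOf_envelope_eq_zero [CompleteSpace X] {r : ι → ℝ≥0∞}
    (hr : IsProfile x r) : profile x {y | envelope x r y = 0} = r := by
  funext i
  show infEDist (x i) _ = r i
  refine le_antisymm ?_ <| le_infEDist.2 fun y hy => by
    simpa [show envelope x r y = 0 from hy] using hr.le_edist_add_envelope i y
  obtain hi | hi := eq_or_ne (r i) ∞
  · exact hi ▸ le_top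
  have hlim : Tendsto (fun k : ℕ => r i + 5 * 2⁻¹ ^ k) atTop (𝓝 (r i)) := by
    simpa using tendsto_const_nhds.add <| ENNReal.Tendsto.const_mul
      (ENNReal.tendsto_pow_atTop_nhds_zero_of_lt_one (by norm_num : (2⁻¹ : ℝ≥0∞) < 1))
      (Or.inr ofNat_ne_top)
  refine ge_of_tendsto' hlim fun k => ?_
  obtain ⟨y, hy, hiy⟩ := exists_envelope_eq_zero_edist_le hr.2 hi k
  exact (infEDist_le_edist_of_mem (by exact hy)).trans hiy

theorem range_profile [CompleteSpace X] (hx : DenseRange x) :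
    range (fun F : {F : Set X // IsClosed F} => profile x F.1) = {r | IsProfile x r} := by
  refine Subset.antisymm (range_subset_iff.2 fun F => isProfile_profile hx F.1) fun r hr => ?_
  refine ⟨⟨closure {y | envelope x r y = 0}, isClosed_closure⟩, ?_⟩
  funext i
  exact infEDist_closure.trans (congrFun hr.profile_setOf_envelope_eq_zero i)

theorem profile_injective_of_isClosed (hx : DenseRange x) {s t : Set X} (hs : IsClosed s)
    (ht : IsClosed t) (h : profile x s = profile x t) : s = t := by
  have := hx.equalizer (continuous_infEDist (s := s)) continuous_infEDist h
  ext y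
  rw [mem_iff_infEDist_zero_of_closed hs, mem_iff_infEDist_zero_of_closed ht, congrFun this y]

theorem nonempty_inter_iff_exists_profile_lt (hx : DenseRange x) {U : Set X} (hU : IsOpen U)
    (s : Set X) : (s ∩ U).Nonempty ↔ ∃ i k, eball (x i) (2⁻¹ ^ k) ⊆ U ∧ profile x s i < 2⁻¹ ^ k := by
  constructor
  · rintro ⟨y, hys, hyU⟩
    obtain ⟨ε, hε, hyε⟩ := EMetric.isOpen_iff.1 hU y hyU
    obtain ⟨k, hk⟩ := ENNReal.exists_inv_two_pow_lt hε.ne'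
    have hpos : (0 : ℝ≥0∞) < 2⁻¹ ^ (k + 1) := ENNReal.pow_pos (by norm_num) _
    obtain ⟨_, ⟨i, rfl⟩, hyi⟩ := EMetric.mem_closure_iff.1 (hx y) _ hpos
    rw [edist_comm] at hyi
    refine ⟨i, k + 1, (eball_subset ?_ (ne_top_of_lt hyi)).trans hyε,
      (infEDist_le_edist_of_mem hys).trans_lt hyi⟩
    calc edist (x i) y + 2⁻¹ ^ (k + 1) ≤ 2⁻¹ ^ (k + 1) + 2⁻¹ ^ (k + 1) := by gcongr
      _ = 2⁻¹ ^ k := ENNReal.inv_two_pow_succ_add_self k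
      _ ≤ ε := hk.le
  · rintro ⟨i, k, hU, hi⟩
    obtain ⟨y, hys, hiy⟩ := infEDist_lt_iff.1 hi
    exact ⟨y, hys, hU (mem_eball'.2 hiy)⟩

section EffrosSigmaAlgebra

attribute [local instance] EffrosSigmaAlgebra

theorem measurable_profile (x : ι → X) :
    Measurable (fun F : {F : Set X // IsClosed F} => profile x F.1) := by
  refine measurable_pi_iff.2 fun i => measurable_of_Iio fun a => ?_
  refine MeasurableSpace.measurableSet_generateFrom ⟨eball (x i) a, isOpen_eball, ?_⟩
  ext F
  simp [profile, infEDist_lt_iff, Set.Nonempty, edist_comm]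

theorem comap_profile (hx : DenseRange x) [Countable ι] :
    MeasurableSpace.comap (fun F : {F : Set X // IsClosed F} => profile x F.1) inferInstance =
      EffrosSigmaAlgebra X := by
  refine le_antisymm (measurable_profile x).comap_le <| MeasurableSpace.generateFrom_le ?_
  rintro _ ⟨U, hU, rfl⟩
  refine ⟨{r | ∃ i k, eball (x i) (2⁻¹ ^ k) ⊆ U ∧ r i < 2⁻¹ ^ k}, ?_, ?_⟩
  · simp only [measurableSet_setOfPred]
    fun_prop
  · ext F
    simp [nonempty_inter_iff_exists_profile_lt hx hU]

theorem measurableEmbedding_profile [CompleteSpace X] [Countable ι] (hx : DenseRange x) :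
    MeasurableEmbedding (fun F : {F : Set X // IsClosed F} => profile x F.1) :=
  MeasurableEmbedding.iff_comap_eq.2
    ⟨fun F G h => Subtype.ext (profile_injective_of_isClosed hx F.2 G.2 h), comap_profile hx,
      range_profile hx ▸ measurableSet_setOf_isProfile⟩

end EffrosSigmaAlgebra

end Effros

/-- If `X` is Polish, then `F(X)` with the Effros σ-algebra is a standard Borel space. -/
theorem effros_standardBorel (X : Type*) [TopologicalSpace X] [PolishSpace X] :
    @StandardBorelSpace {F : Set X // IsClosed F} (EffrosSigmaAlgebra X) := by
  let := TopologicalSpace.upgradeIsCompletelyMetrizable X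
  obtain ⟨D, hD, hD_dense⟩ := TopologicalSpace.exists_countable_dense X
  have := hD.to_subtype
  let := EffrosSigmaAlgebra X
  exact (Effros.measurableEmbedding_profile hD_dense.denseRange_val).standardBorelSpace
end

section
/- Let X be an uncountable Polish space. Then the Borel σ-algebra of X is strictly contained in the class Π¹₁(X) of coanalytic subsets of X. -/
/-!
Through a countable basis `B n` of `(ℕ → Bool) × (ℕ → ℕ)`, a point `c` of Cantor space codes the
closed set `(⋃ {B n | c n = true})ᶜ`, and its projection is an analytic subset of Cantor space;
every analytic subset arises this way. The diagonal `D = {c | c lies in the set coded by c}` is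
analytic, while `Dᶜ` is not, since a code `c` of `Dᶜ` would satisfy `c ∈ D ↔ c ∉ D`. Hence `D` is
not Borel. An uncountable Polish space receives a continuous injection from Cantor space; the
image of `D` is analytic and not Borel, and its complement is coanalytic and not Borel.
-/

open MeasureTheory Set TopologicalSpace

section ClosedCodes

variable {W : Type*} [TopologicalSpace W]

def closedOfCode (B : ℕ → Set W) (c : ℕ → Bool) : Set W :=
  (⋃ (n) (_ : c n = true), B n)ᶜ

theorem isClosed_setOf_mem_closedOfCode {B : ℕ → Set W} (hB : ∀ n, IsOpen (B n)) :
    IsClosed {p : (ℕ → Bool) × W | p.2 ∈ closedOfCode B p.1} := by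
  have hcompl : {p : (ℕ → Bool) × W | p.2 ∈ closedOfCode B p.1}ᶜ
      = ⋃ n, {c : ℕ → Bool | c n = true} ×ˢ B n := by
    ext p
    simp [closedOfCode]
  refine isOpen_compl_iff.1 (hcompl ▸ isOpen_iUnion fun n => IsOpen.prod ?_ (hB n))
  exact (isOpen_discrete {true}).preimage (continuous_apply (A := fun _ => Bool) n)

theorem exists_closedOfCode_eq {B : ℕ → Set W} (hB : IsTopologicalBasis (range B))
    {F : Set W} (hF : IsClosed F) : ∃ c, closedOfCode B c = F := by
  classical
  refine ⟨fun n => decide (Disjoint (B n) F), ?_⟩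
  ext w
  simp only [closedOfCode, mem_compl_iff, mem_iUnion, decide_eq_true_eq, not_exists]
  refine ⟨fun hw => by_contra fun hwF => ?_,
    fun hwF n hdisj hwB => hdisj.notMem_of_mem_left hwB hwF⟩
  obtain ⟨_, ⟨n, rfl⟩, hwB, hBF⟩ := hB.exists_subset_of_mem_open hwF hF.isOpen_compl
  exact hw n (subset_compl_iff_disjoint_right.1 hBF) hwB

end ClosedCodes

section AnalyticCodes

variable {Y : Type*} [TopologicalSpace Y]

def analyticOfCode (B : ℕ → Set (Y × (ℕ → ℕ))) (c : ℕ → Bool) : Set Y :=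
  Prod.fst '' closedOfCode B c

theorem exists_analyticOfCode_eq [T2Space Y] {B : ℕ → Set (Y × (ℕ → ℕ))}
    (hB : IsTopologicalBasis (range B)) {A : Set Y} (hA : AnalyticSet A) :
    ∃ c, analyticOfCode B c = A := by
  rw [AnalyticSet] at hA
  rcases hA with rfl | ⟨f, hf, rfl⟩
  · obtain ⟨c, hc⟩ := exists_closedOfCode_eq hB isClosed_empty
    exact ⟨c, by rw [analyticOfCode, hc, image_empty]⟩
  · have hgraph : IsClosed {p : Y × (ℕ → ℕ) | f p.2 = p.1} :=
      isClosed_eq (hf.comp continuous_snd) continuous_fst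
    obtain ⟨c, hc⟩ := exists_closedOfCode_eq hB hgraph
    refine ⟨c, ?_⟩
    ext x
    simp [analyticOfCode, hc, eq_comm]

end AnalyticCodes

section Diagonal

-- Instance search finds this at top level, but not as a subgoal of `PolishSpace (ℕ → Bool)`.
instance : PolishSpace Bool := inferInstance

def diagonalOfCode (B : ℕ → Set ((ℕ → Bool) × (ℕ → ℕ))) : Set (ℕ → Bool) :=
  {c | c ∈ analyticOfCode B c}

variable {B : ℕ → Set ((ℕ → Bool) × (ℕ → ℕ))}

theorem analyticSet_diagonalOfCode (hB : ∀ n, IsOpen (B n)) : AnalyticSet (diagonalOfCode B) := by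
  have hclosed : IsClosed {p : (ℕ → Bool) × (ℕ → ℕ) | p ∈ closedOfCode B p.1} :=
    (isClosed_setOf_mem_closedOfCode hB).preimage (continuous_fst.prodMk continuous_id)
  have hproj : diagonalOfCode B = Prod.fst '' {p | p ∈ closedOfCode B p.1} := by
    ext c
    simp [diagonalOfCode, analyticOfCode]
  exact hproj ▸ hclosed.analyticSet.image_of_continuous continuous_fst

theorem not_analyticSet_compl_diagonalOfCode (hB : IsTopologicalBasis (range B)) :
    ¬ AnalyticSet (diagonalOfCode B)ᶜ := fun h => by
  obtain ⟨c, hc⟩ := exists_analyticOfCode_eq hB h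
  have hself : c ∈ diagonalOfCode B ↔ c ∈ (diagonalOfCode B)ᶜ := by
    rw [← hc]
    rfl
  exact iff_not_self hself

end Diagonal

theorem exists_analyticSet_not_measurableSet_cantor :
    ∃ D : Set (ℕ → Bool), AnalyticSet D ∧ ¬ MeasurableSet D := by
  obtain ⟨B, hB⟩ := exists_seq_basis ((ℕ → Bool) × (ℕ → ℕ))
  have hBopen : ∀ n, IsOpen (B n) := fun n => hB.isOpen (mem_range_self n)
  exact ⟨diagonalOfCode B, analyticSet_diagonalOfCode hBopen,
    fun hD => not_analyticSet_compl_diagonalOfCode hB hD.compl.analyticSet⟩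

theorem exists_analyticSet_not_measurableSet (X : Type*) [TopologicalSpace X] [PolishSpace X]
    [MeasurableSpace X] [BorelSpace X] (hX : ¬ Countable X) :
    ∃ S : Set X, AnalyticSet S ∧ ¬ MeasurableSet S := by
  obtain ⟨f, -, hf, hinj⟩ :=
    isClosed_univ.exists_nat_bool_injection_of_not_countable (countable_univ_iff.not.2 hX)
  obtain ⟨D, hD, hDmeas⟩ := exists_analyticSet_not_measurableSet_cantor
  refine ⟨f '' D, hD.image_of_continuous hf, fun himage => hDmeas ?_⟩
  simpa only [preimage_image_eq D hinj] using hf.measurable himage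

/-- In an uncountable Polish space, the Borel sets form a strict subclass of the
coanalytic (Π¹₁) sets. -/
theorem borel_ssubset_coanalytic (X : Type*) [TopologicalSpace X] [PolishSpace X]
    [MeasurableSpace X] [BorelSpace X] (hX : ¬ Countable X) :
    {A : Set X | MeasurableSet A} ⊂ {A : Set X | AnalyticSet Aᶜ} := by
  have hsub : {A : Set X | MeasurableSet A} ⊆ {A : Set X | AnalyticSet Aᶜ} :=
    fun A hA => hA.compl.analyticSet
  obtain ⟨S, hS, hSmeas⟩ := exists_analyticSet_not_measurableSet X hX
  refine (ssubset_iff_of_subset hsub).2 ⟨Sᶜ, by simpa using hS, fun hSc => hSmeas ?_⟩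
  simpa using MeasurableSet.compl hSc
end
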